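/- For every positive integer k, let Σ be the signed complete graph on 4k vertices whose negative edges form a perfect matching and all of whose other edges are positive. Then χ(Σ) = 2k, the maximum deficiency M(Σ) = 0, and Σ is an exceptional graph. In particular, there exist infinitely many exceptional graphs. -/

import Mathlib

/-- A signed simple graph: a symmetric, loopless adjacency relation together with a
symmetric signature taking values `1` (positive) or `-1` (negative). -/
structure SignedGraph (V : Type) where
  Adj : V → V → Prop
  sign : V → V → ℤ
  symm : ∀ u v, Adj u v → Adj v u
  loopless : ∀ v, ¬ Adj v v
  sign_symm : ∀ u v, sign u v = sign v u
  sign_unit : ∀ u v, sign u v = 1 ∨ sign u v = -1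

/-- The color set of size `n`: for `n = 2k` it is `{±1, …, ±k}`, and for
`n = 2k+1` it is `{±1, …, ±k, 0}`. -/
noncomputable def colorSet (n : ℕ) : Finset ℤ :=
  (Finset.Icc (-((n / 2 : ℕ) : ℤ)) ((n / 2 : ℕ) : ℤ)).filter (fun i => i ≠ 0 ∨ n % 2 = 1)

/-- A proper coloration of a signed graph with the color set of size `n`:
the colors lie in `colorSet n` and for every edge `uv`, `κ u ≠ σ(uv) · κ v`. -/
def ProperColoring {V : Type} (G : SignedGraph V) (n : ℕ) (κ : V → ℤ) : Prop :=
  (∀ v, κ v ∈ colorSet n) ∧ ∀ u v, G.Adj u v → κ u ≠ G.sign u v * κ v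

/-- The chromatic number: the least `n` such that there is a proper coloration
with the color set of size `n`. -/
noncomputable def chromNum {V : Type} (G : SignedGraph V) : ℕ :=
  sInf {n | ∃ κ : V → ℤ, ProperColoring G n κ}

/-- The deficiency set of a (minimal) coloration: the colors of the color set of size
`χ(G)` not taken by `κ`. -/
noncomputable def defSet {V : Type} [Fintype V] (G : SignedGraph V) (κ : V → ℤ) : Finset ℤ :=
  (colorSet (chromNum G)).filter (fun c => ∀ v, κ v ≠ c)

/-- The deficiency of a (minimal) coloration: the number of unused colors. -/
noncomputable def deficiency {V : Type} [Fintype V] (G : SignedGraph V) (κ : V → ℤ) : ℕ :=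
  (defSet G κ).card

/-- The maximum deficiency: the maximum of `deficiency G κ` over all minimal
proper colorations `κ` of `G`. -/
noncomputable def maxDef {V : Type} [Fintype V] (G : SignedGraph V) : ℕ :=
  sSup {d | ∃ κ : V → ℤ, ProperColoring G (chromNum G) κ ∧ deficiency G κ = d}

/-- A signed graph (with even chromatic number `2k`) is exceptional if in every proper
coloration with color set `{±1, …, ±k}` using exactly `χ(G) - M(G)` distinct colors,
every used color appears on both endpoints of some negative edge. -/
def Exceptional {V : Type} [Fintype V] (G : SignedGraph V) : Prop :=
  ∀ κ : V → ℤ, ProperColoring G (chromNum G) κ →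
    (Finset.univ.image κ).card = chromNum G - maxDef G →
    ∀ c ∈ Finset.univ.image κ,
      ∃ u v, G.Adj u v ∧ G.sign u v = -1 ∧ κ u = c ∧ κ v = c

/-- The all-positive join of two (vertex-disjoint) signed graphs: keep the edges and
signs of both graphs and join every vertex of the first to every vertex of the second
by a positive edge. -/
def posJoin {V₁ V₂ : Type} (G₁ : SignedGraph V₁) (G₂ : SignedGraph V₂) :
    SignedGraph (V₁ ⊕ V₂) where
  Adj x y :=
    match x, y with
    | Sum.inl a, Sum.inl b => G₁.Adj a b
    | Sum.inr a, Sum.inr b => G₂.Adj a b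
    | _, _ => True
  sign x y :=
    match x, y with
    | Sum.inl a, Sum.inl b => G₁.sign a b
    | Sum.inr a, Sum.inr b => G₂.sign a b
    | _, _ => 1
  symm := by
    rintro (a | a) (b | b) h
    · exact G₁.symm a b h
    · trivial
    · trivial
    · exact G₂.symm a b h
  loopless := by
    rintro (a | a) h
    · exact G₁.loopless a h
    · exact G₂.loopless a h
  sign_symm := by
    rintro (a | a) (b | b)
    · exact G₁.sign_symm a b
    · rfl
    · rfl
    · exact G₂.sign_symm a b
  sign_unit := by
    rintro (a | a) (b | b)
    · exact G₁.sign_unit a b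
    · exact Or.inl rfl
    · exact Or.inl rfl
    · exact G₂.sign_unit a b
/- ===== auxiliary lemmas ===== -/

lemma colorSet_card (n : ℕ) : (colorSet n).card = n := by
  rcases Nat.even_or_odd n with he | ho
  · have h2 : n % 2 = 0 := Nat.even_iff.mp he
    have h : colorSet n
        = (Finset.Icc (-((n / 2 : ℕ) : ℤ)) ((n / 2 : ℕ) : ℤ)).erase 0 := by
      rw [colorSet, ← Finset.filter_ne']
      exact Finset.filter_congr (fun x _ => by simp [h2])
    rw [h, Finset.card_erase_of_mem (by simp; omega), Int.card_Icc]
    omega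
  · have h2 : n % 2 = 1 := Nat.odd_iff.mp ho
    rw [colorSet, Finset.filter_true_of_mem (fun x _ => Or.inr h2), Int.card_Icc]
    omega

lemma ne_zero_of_mem_colorSet {n : ℕ} (h2 : n % 2 = 0) {c : ℤ} (hc : c ∈ colorSet n) :
    c ≠ 0 := by
  rw [colorSet, Finset.mem_filter] at hc
  rcases hc.2 with h | h
  · exact h
  · omega

/-- Vertices with equal colors under a proper coloring of a complete signed graph
are joined by a negative edge. -/
lemma sign_neg_of_eq_color {V : Type} (S : SignedGraph V)
    (hadj : ∀ u v : V, S.Adj u v ↔ u ≠ v)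
    {n : ℕ} {κ : V → ℤ} (hκ : ProperColoring S n κ)
    {u v : V} (huv : u ≠ v) (hc : κ u = κ v) : S.sign u v = -1 := by
  rcases S.sign_unit u v with h | h
  · exfalso
    exact hκ.2 u v ((hadj u v).mpr huv) (by rw [h, one_mul]; exact hc)
  · exact h

/-- Each color class of a proper coloring has at most two vertices. -/
lemma fiber_card_le_two {V : Type} [Fintype V] (S : SignedGraph V)
    (hadj : ∀ u v : V, S.Adj u v ↔ u ≠ v)
    (hmatch : ∀ v : V, ∃! w : V, w ≠ v ∧ S.sign v w = -1)
    {n : ℕ} {κ : V → ℤ} (hκ : ProperColoring S n κ) (c : ℤ) :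
    (Finset.univ.filter (fun v => κ v = c)).card ≤ 2 := by
  by_contra h
  push_neg at h
  obtain ⟨a, ha, b, hb, d, hd, hab, had, hbd⟩ := Finset.two_lt_card.mp h
  simp only [Finset.mem_filter, Finset.mem_univ, true_and] at ha hb hd
  have h1 : S.sign a b = -1 := sign_neg_of_eq_color S hadj hκ hab (ha.trans hb.symm)
  have h2 : S.sign a d = -1 := sign_neg_of_eq_color S hadj hκ had (ha.trans hd.symm)
  exact hbd ((hmatch a).unique ⟨Ne.symm hab, h1⟩ ⟨Ne.symm had, h2⟩)

/-- Counting lower bound: a proper coloring with `n` colors forces `card V ≤ 2n`. -/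
lemma card_le_two_mul {V : Type} [Fintype V] (S : SignedGraph V)
    (hadj : ∀ u v : V, S.Adj u v ↔ u ≠ v)
    (hmatch : ∀ v : V, ∃! w : V, w ≠ v ∧ S.sign v w = -1)
    {n : ℕ} {κ : V → ℤ} (hκ : ProperColoring S n κ) :
    Fintype.card V ≤ 2 * n := by
  have hsum := Finset.card_eq_sum_card_fiberwise
    (fun v (_ : v ∈ (Finset.univ : Finset V)) => hκ.1 v)
  rw [← Finset.card_univ, hsum]
  calc ∑ c ∈ colorSet n, (Finset.univ.filter (fun v => κ v = c)).card
      ≤ ∑ _c ∈ colorSet n, 2 :=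
        Finset.sum_le_sum (fun c _ => fiber_card_le_two S hadj hmatch hκ c)
    _ = 2 * n := by rw [Finset.sum_const, colorSet_card, smul_eq_mul, Nat.mul_comm]

/-- In a tight proper coloring every color class has exactly two vertices. -/
lemma fibers_exact {V : Type} [Fintype V] {k : ℕ} (hV : Fintype.card V = 4 * k)
    (S : SignedGraph V)
    (hadj : ∀ u v : V, S.Adj u v ↔ u ≠ v)
    (hmatch : ∀ v : V, ∃! w : V, w ≠ v ∧ S.sign v w = -1)
    {κ : V → ℤ} (hκ : ProperColoring S (2 * k) κ) :
    ∀ c ∈ colorSet (2 * k), (Finset.univ.filter (fun v => κ v = c)).card = 2 := by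
  have hsum := Finset.card_eq_sum_card_fiberwise
    (fun v (_ : v ∈ (Finset.univ : Finset V)) => hκ.1 v)
  rw [Finset.card_univ, hV] at hsum
  have h2 : ∑ _c ∈ colorSet (2 * k), 2 = 4 * k := by
    rw [Finset.sum_const, colorSet_card, smul_eq_mul]; ring
  exact fun c hc =>
    (Finset.sum_eq_sum_iff_of_le
      (fun c _ => fiber_card_le_two S hadj hmatch hκ c)).mp
      (hsum.symm.trans h2.symm) c hc

/-- Existence of a proper coloring with `2k` colors using every color. -/
lemma exists_good_coloring {V : Type} [Fintype V] {k : ℕ}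
    (hV : Fintype.card V = 4 * k) (S : SignedGraph V)
    (hadj : ∀ u v : V, S.Adj u v ↔ u ≠ v)
    (hmatch : ∀ v : V, ∃! w : V, w ≠ v ∧ S.sign v w = -1) :
    ∃ κ : V → ℤ, ProperColoring S (2 * k) κ ∧ ∀ c ∈ colorSet (2 * k), ∃ v, κ v = c := by
  classical
  set m : V → V := fun v => (hmatch v).exists.choose with hm_def
  have hm : ∀ v, m v ≠ v ∧ S.sign v (m v) = -1 := fun v => (hmatch v).exists.choose_spec
  have hmu : ∀ v w, w ≠ v → S.sign v w = -1 → w = m v :=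
    fun v w h1 h2 => (hmatch v).unique ⟨h1, h2⟩ ⟨(hm v).1, (hm v).2⟩
  have hmm : ∀ v, m (m v) = v := fun v =>
    (hmu (m v) v (Ne.symm (hm v).1) (by rw [S.sign_symm]; exact (hm v).2)).symm
  set pairs : Finset (Finset V) := Finset.univ.image (fun v => ({v, m v} : Finset V))
    with hpairs_def
  have hmem : ∀ v : V, ({v, m v} : Finset V) ∈ pairs :=
    fun v => Finset.mem_image_of_mem _ (Finset.mem_univ v)
  have hfib : ∀ v : V, Finset.univ.filter (fun u => ({u, m u} : Finset V) = {v, m v})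
      = ({v, m v} : Finset V) := by
    intro v
    ext u
    simp only [Finset.mem_filter, Finset.mem_univ, true_and]
    constructor
    · intro h; rw [← h]; exact Finset.mem_insert_self u _
    · intro hu
      rcases Finset.mem_insert.mp hu with rfl | hu
      · rfl
      · rw [Finset.mem_singleton] at hu
        subst hu
        rw [hmm]
        exact Finset.pair_comm _ _
  have hpc : pairs.card = 2 * k := by
    have h := Finset.card_eq_sum_card_fiberwise
      (f := fun v => ({v, m v} : Finset V)) (s := Finset.univ) (t := pairs)
      (fun v _ => hmem v)
    rw [Finset.card_univ, hV] at h
    have h2 : ∀ p ∈ pairs, (Finset.univ.filter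
        (fun u => ({u, m u} : Finset V) = p)).card = 2 := by
      intro p hp
      obtain ⟨v, -, rfl⟩ := Finset.mem_image.mp hp
      rw [hfib v, Finset.card_pair (Ne.symm (hm v).1)]
    rw [Finset.sum_congr rfl h2, Finset.sum_const, smul_eq_mul] at h
    omega
  have hcards : Fintype.card ↥pairs = Fintype.card ↥(colorSet (2 * k)) := by
    rw [Fintype.card_coe, Fintype.card_coe, hpc, colorSet_card]
  let g := Fintype.equivOfCardEq hcards
  set κ : V → ℤ := fun v => (((g ⟨{v, m v}, hmem v⟩ : ↥(colorSet (2 * k)))) : ℤ)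
    with hκ_def
  have hκmem : ∀ v, κ v ∈ colorSet (2 * k) := fun v => (g ⟨{v, m v}, hmem v⟩).2
  have hne0 : ∀ v, κ v ≠ 0 := fun v =>
    ne_zero_of_mem_colorSet (by omega) (hκmem v)
  have hpeq : ∀ u v : V, ({u, m u} : Finset V) = {v, m v} → κ u = κ v := by
    intro u v h
    simp only [hκ_def]
    exact congrArg (fun p : ↥pairs => ((g p : ↥(colorSet (2 * k))) : ℤ)) (Subtype.ext h)
  have hinj : ∀ u v : V, κ u = κ v → ({u, m u} : Finset V) = {v, m v} := by
    intro u v h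
    have := g.injective (Subtype.ext h)
    exact congrArg Subtype.val this
  refine ⟨κ, ⟨hκmem, ?_⟩, ?_⟩
  · intro u v hA heq
    have huv : u ≠ v := (hadj u v).mp hA
    rcases S.sign_unit u v with hs | hs
    · rw [hs, one_mul] at heq
      have hpair := hinj u v heq
      have : u ∈ ({v, m v} : Finset V) := by
        rw [← hpair]; exact Finset.mem_insert_self u _
      rcases Finset.mem_insert.mp this with rfl | hu
      · exact huv rfl
      · rw [Finset.mem_singleton] at hu
        have : S.sign v u = -1 := hu ▸ (hm v).2
        rw [S.sign_symm, hs] at this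
        norm_num at this
    · have hvmu : v = m u := hmu u v (Ne.symm huv) hs
      have hpair : ({u, m u} : Finset V) = {v, m v} := by
        rw [hvmu, hmm]
        exact Finset.pair_comm _ _
      have hκuv : κ u = κ v := hpeq u v hpair
      rw [hs, neg_one_mul, hκuv] at heq
      exact hne0 v (by linarith)
  · intro c hc
    obtain ⟨v, -, hv⟩ := Finset.mem_image.mp (g.symm ⟨c, hc⟩).2
    refine ⟨v, ?_⟩
    have : (⟨{v, m v}, hmem v⟩ : ↥pairs) = g.symm ⟨c, hc⟩ := Subtype.ext hv
    simp only [hκ_def, this, Equiv.apply_symm_apply]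

/-- The first (universal) bullet of the theorem, as a standalone lemma. -/
lemma matched_main (k : ℕ) (hk : 0 < k) (V : Type) [Fintype V]
    (hV : Fintype.card V = 4 * k) (S : SignedGraph V)
    (hadj : ∀ u v : V, S.Adj u v ↔ u ≠ v)
    (hmatch : ∀ v : V, ∃! w : V, w ≠ v ∧ S.sign v w = -1) :
    chromNum S = 2 * k ∧ maxDef S = 0 ∧ Exceptional S := by
  obtain ⟨κ₀, hκ₀, hκ₀surj⟩ := exists_good_coloring hV S hadj hmatch
  have hchrom : chromNum S = 2 * k := by
    apply le_antisymm
    · exact Nat.sInf_le ⟨κ₀, hκ₀⟩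
    · rw [chromNum]
      refine le_csInf ⟨2 * k, κ₀, hκ₀⟩ ?_
      rintro n ⟨κ, hκ⟩
      have := card_le_two_mul S hadj hmatch hκ
      omega
  have hdef0 : ∀ κ : V → ℤ, ProperColoring S (2 * k) κ → deficiency S κ = 0 := by
    intro κ hκ
    rw [deficiency, Finset.card_eq_zero, defSet, hchrom, Finset.filter_eq_empty_iff]
    intro c hc hnone
    have h2 := fibers_exact hV S hadj hmatch hκ c hc
    have hne : (Finset.univ.filter (fun v => κ v = c)).Nonempty := by
      rw [← Finset.card_pos, h2]; norm_num
    obtain ⟨v, hv⟩ := hne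
    exact hnone v (Finset.mem_filter.mp hv).2
  have hmax : maxDef S = 0 := by
    have hD : {d | ∃ κ : V → ℤ, ProperColoring S (chromNum S) κ ∧ deficiency S κ = d}
        = {0} := by
      apply Set.eq_singleton_iff_unique_mem.mpr
      refine ⟨⟨κ₀, by rw [hchrom]; exact hκ₀, hdef0 κ₀ hκ₀⟩, ?_⟩
      rintro d ⟨κ, hκ, rfl⟩
      exact hdef0 κ (by rwa [hchrom] at hκ)
    rw [maxDef, hD, csSup_singleton]
  refine ⟨hchrom, hmax, ?_⟩
  intro κ hκ _ c hcim
  rw [hchrom] at hκ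
  obtain ⟨v, -, hv⟩ := Finset.mem_image.mp hcim
  have hc : c ∈ colorSet (2 * k) := hv ▸ hκ.1 v
  have h2 := fibers_exact hV S hadj hmatch hκ c hc
  have h3 : 1 < (Finset.univ.filter (fun v => κ v = c)).card := by omega
  obtain ⟨a, ha, b, hb, hab⟩ := Finset.one_lt_card.mp h3
  simp only [Finset.mem_filter, Finset.mem_univ, true_and] at ha hb
  exact ⟨a, b, (hadj a b).mpr hab,
    sign_neg_of_eq_color S hadj hκ hab (ha.trans hb.symm), ha, hb⟩

/-- The explicit matched complete signed graph on `Fin (4k)`. -/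
def matchedGraph (k : ℕ) : SignedGraph (Fin (4 * k)) where
  Adj u v := u ≠ v
  sign u v := if (u : ℕ) / 2 = (v : ℕ) / 2 ∧ u ≠ v then -1 else 1
  symm _ _ h := h.symm
  loopless v h := h rfl
  sign_symm := by
    intro u v
    by_cases h : (u : ℕ) / 2 = (v : ℕ) / 2 ∧ u ≠ v
    · rw [if_pos h, if_pos ⟨h.1.symm, h.2.symm⟩]
    · rw [if_neg h, if_neg (fun h' => h ⟨h'.1.symm, h'.2.symm⟩)]
  sign_unit := by
    intro u v
    split
    · exact Or.inr rfl
    · exact Or.inl rfl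

lemma matchedGraph_sign (k : ℕ) (u v : Fin (4 * k)) :
    (matchedGraph k).sign u v
      = if (u : ℕ) / 2 = (v : ℕ) / 2 ∧ u ≠ v then -1 else 1 := rfl

lemma matchedGraph_matching (k : ℕ) (hk : 0 < k) :
    ∀ v : Fin (4 * k), ∃! w : Fin (4 * k), w ≠ v ∧ (matchedGraph k).sign v w = -1 := by
  intro v
  have hvlt : (v : ℕ) < 4 * k := v.isLt
  have hwlt : 2 * ((v : ℕ) / 2) + 1 - (v : ℕ) % 2 < 4 * k := by omega
  set w : Fin (4 * k) := ⟨2 * ((v : ℕ) / 2) + 1 - (v : ℕ) % 2, hwlt⟩ with hw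
  have hwval : (w : ℕ) = 2 * ((v : ℕ) / 2) + 1 - (v : ℕ) % 2 := rfl
  have hwv : w ≠ v := by
    intro h
    have h2 : (w : ℕ) = (v : ℕ) := congrArg Fin.val h
    omega
  refine ⟨w, ⟨hwv, ?_⟩, ?_⟩
  · rw [matchedGraph_sign]
    exact if_pos ⟨by omega, Ne.symm hwv⟩
  · rintro y ⟨hy1, hy2⟩
    rw [matchedGraph_sign] at hy2
    by_cases hc : (v : ℕ) / 2 = (y : ℕ) / 2 ∧ v ≠ y
    · have hyv : (y : ℕ) ≠ (v : ℕ) := fun h => hy1 (Fin.val_injective h)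
      apply Fin.val_injective
      omega
    · rw [if_neg hc] at hy2
      norm_num at hy2

/-- for every positive `k`, a signed complete graph on `4k` vertices whose
negative edges form a perfect matching (all other edges positive) has chromatic number
`2k`, maximum deficiency `0`, and is exceptional.  In particular, for every positive `k`
there is an exceptional signed graph with chromatic number `2k`, so there exist
infinitely many exceptional graphs. -/
theorem matched_complete_graph_exceptional :
    (∀ (k : ℕ), 0 < k → ∀ (V : Type) [Fintype V], Fintype.card V = 4 * k →
      ∀ S : SignedGraph V,
        (∀ u v : V, S.Adj u v ↔ u ≠ v) →
        (∀ v : V, ∃! w : V, w ≠ v ∧ S.sign v w = -1) →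
        chromNum S = 2 * k ∧ maxDef S = 0 ∧ Exceptional S) ∧
    ∀ (k : ℕ), 0 < k → ∃ S : SignedGraph (Fin (4 * k)),
      Exceptional S ∧ chromNum S = 2 * k := by
  refine ⟨matched_main, ?_⟩
  intro k hk
  obtain ⟨h1, -, h3⟩ := matched_main k hk (Fin (4 * k)) (by simp) (matchedGraph k)
    (fun u v => Iff.rfl) (matchedGraph_matching k hk)
  exact ⟨matchedGraph k, h3, h1⟩
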